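/- arXiv:1505.00178 — 5 statements merged into one kernel-verified Lean document; each statement's English description precedes it below -/
import Mathlib

section
/- Let W_1,...,W_n and S_{i→j} (for i < j ≤ n) be finite-dimensional subspaces of a vector space with S_{i→j} ≤ W_i for all i < j. Then for each j ≤ n: h(W_j | W_[j+1,n]) + Σ_{i<j} h(S_{i→j} | W_[i+1,n]) ≤ Σ_{i<j} dim S_{i→j} + h(W_j | Σ_{i<j} S_{i→j} + W_[j+1,n]), where h(A|B) = dim(A+B) − dim B and W_[a,b] = Σ_{a ≤ m ≤ b} W_m. (Dimension version of Proposition 1, using monotonicity of conditional dimension.) -/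
/-!
Write `B = W_[j+1,n]` and `T = Σ_{i<j} S_{i→j}`. Expanding `h(W_j + T | B)` by the chain rule in
both orders gives `h(W_j | B) + h(T | W_j + B) = h(T | B) + h(W_j | T + B)`. Telescoping `h(T | ·)`
over `i` (conditioning each `S_{i→j}` on the later ones) bounds `h(T | B)` termwise by
`Σ_{i<j} dim S_{i→j}`, and splits `h(T | W_j + B)` into terms `h(S_{i→j} | S_{(i,j)} + W_j + B)`
whose conditions lie in `W_[i+1,n]` because `S_{k→j} ≤ W_k`; monotonicity of `h` in the condition
bounds each of them below by `h(S_{i→j} | W_[i+1,n])`.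
-/

open Module Finset

/-- Conditional dimension: `h(A|B) = dim(A+B) - dim(B)`. -/
noncomputable def condDim {F V : Type*} [Field F] [AddCommGroup V] [Module F V]
    (A B : Submodule F V) : ℤ :=
  (finrank F ↥(A ⊔ B) : ℤ) - (finrank F ↥B : ℤ)

namespace condDim

variable {F V : Type*} [Field F] [AddCommGroup V] [Module F V]

theorem sup_left (A B C : Submodule F V) :
    condDim (A ⊔ B) C = condDim A (B ⊔ C) + condDim B C := by
  unfold condDim
  rw [sup_assoc]
  ring

theorem add_sup_comm (A B C : Submodule F V) :
    condDim A C + condDim B (A ⊔ C) = condDim B C + condDim A (B ⊔ C) := by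
  rw [add_comm, ← sup_left, add_comm, ← sup_left, sup_comm]

theorem eq_finrank_sub_finrank_inf (A B : Submodule F V)
    [FiniteDimensional F A] [FiniteDimensional F B] :
    condDim A B = finrank F A - finrank F ↥(A ⊓ B) := by
  have := Submodule.finrank_sup_add_finrank_inf_eq A B
  unfold condDim
  omega

theorem le_finrank (A B : Submodule F V) [FiniteDimensional F A] [FiniteDimensional F B] :
    condDim A B ≤ finrank F A := by
  rw [eq_finrank_sub_finrank_inf]
  omega

theorem anti_right (A : Submodule F V) {B C : Submodule F V} (h : B ≤ C)
    [FiniteDimensional F A] [FiniteDimensional F C] : condDim A C ≤ condDim A B := by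
  have : FiniteDimensional F B := Submodule.finiteDimensional_of_le h
  rw [eq_finrank_sub_finrank_inf, eq_finrank_sub_finrank_inf]
  have := Submodule.finrank_mono (inf_le_inf_left A h)
  omega

theorem finset_sup {ι : Type*} [LinearOrder ι] (S : ι → Submodule F V) (C : Submodule F V)
    (s : Finset ι) :
    condDim (s.sup S) C = ∑ i ∈ s, condDim (S i) ((s.filter (i < ·)).sup S ⊔ C) := by
  induction s using Finset.induction_on_min with
  | empty => rw [Finset.sup_empty, sum_empty, condDim, bot_sup_eq, sub_self]
  | insert a s ha ih =>
    have ha' : a ∉ s := fun h => lt_irrefl a (ha a h)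
    have hfilter : ∀ i ∈ s, (insert a s).filter (i < ·) = s.filter (i < ·) := fun i hi => by
      rw [filter_insert, if_neg (ha i hi).not_gt]
    rw [sup_insert, sum_insert ha', sup_left, ih, filter_insert, if_neg (lt_irrefl a),
      filter_true_of_mem ha]
    congr 1
    exact sum_congr rfl fun i hi => by rw [hfilter i hi]

end condDim

theorem stmt3_general {F V : Type*} [Field F] [AddCommGroup V] [Module F V]
    (W S : ℕ → Submodule F V)
    (hfdW : ∀ i, FiniteDimensional F ↥(W i)) (hfdS : ∀ i, FiniteDimensional F ↥(S i))
    (n j : ℕ) (hjn : j ≤ n)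
    (hSW : ∀ i, i < j → S i ≤ W i) :
    condDim (W j) ((Finset.Icc (j+1) n).sup W)
      + ∑ i ∈ Finset.Icc 1 (j-1), condDim (S i) ((Finset.Icc (i+1) n).sup W)
    ≤ (∑ i ∈ Finset.Icc 1 (j-1), (finrank F ↥(S i) : ℤ))
      + condDim (W j) (((Finset.Icc 1 (j-1)).sup S) ⊔ (Finset.Icc (j+1) n).sup W) := by
  set B := (Icc (j+1) n).sup W
  set T := (Icc 1 (j-1)).sup S
  have hlower : ∑ i ∈ Icc 1 (j-1), condDim (S i) ((Icc (i+1) n).sup W) ≤ condDim T (W j ⊔ B) := by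
    rw [condDim.finset_sup]
    refine sum_le_sum fun i hi => condDim.anti_right _ ?_
    simp only [mem_Icc] at hi
    refine sup_le (Finset.sup_le fun k hk => ?_) (sup_le (le_sup ?_) (sup_mono ?_))
    · simp only [mem_filter, mem_Icc] at hk
      exact (hSW k (by omega)).trans (le_sup (by simp only [mem_Icc]; omega))
    · simp only [mem_Icc]; omega
    · exact fun k hk => by simp only [mem_Icc] at hk ⊢; omega
  have hupper : condDim T B ≤ ∑ i ∈ Icc 1 (j-1), (finrank F (S i) : ℤ) := by
    rw [condDim.finset_sup]
    exact sum_le_sum fun i _ => condDim.le_finrank _ _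
  linarith [condDim.add_sup_comm (W j) T B]

/-- Proposition 1, dimension version: with `S i ≤ W i` for `i < j`,
`h(W_j | W_[j+1,n]) + Σ_{i<j} h(S_{i→j} | W_[i+1,n])
  ≤ Σ_{i<j} dim S_{i→j} + h(W_j | Σ_{i<j} S_{i→j} + W_[j+1,n])`. -/
theorem stmt3 {F V : Type*} [Field F] [AddCommGroup V] [Module F V]
    (W S : ℕ → Submodule F V)
    (hfdW : ∀ i, FiniteDimensional F ↥(W i)) (hfdS : ∀ i, FiniteDimensional F ↥(S i))
    (n j : ℕ) (hj1 : 1 ≤ j) (hjn : j ≤ n)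
    (hSW : ∀ i, i < j → S i ≤ W i) :
    condDim (W j) ((Finset.Icc (j+1) n).sup W)
      + ∑ i ∈ Finset.Icc 1 (j-1), condDim (S i) ((Finset.Icc (i+1) n).sup W)
    ≤ (∑ i ∈ Finset.Icc 1 (j-1), (finrank F ↥(S i) : ℤ))
      + condDim (W j) (((Finset.Icc 1 (j-1)).sup S) ⊔ (Finset.Icc (j+1) n).sup W) :=
  stmt3_general W S hfdW hfdS n j hjn hSW
end

section
/- Let W_1,...,W_n be finite-dimensional subspaces of a vector space and S_{i→j} ≤ W_i subspaces for 1 ≤ i < j ≤ ℓ, with ℓ ≤ n. Then dim(W_1 + ... + W_n) + Σ_{1 ≤ i < j ≤ ℓ} h(S_{i→j} | W_[i+1,n]) ≤ dim(W_[ℓ+1,n]) + Σ_{1 ≤ i < j ≤ ℓ} dim(S_{i→j}) + Σ_{j ≤ ℓ} h(W_j | Σ_{i<j} S_{i→j} + W_[j+1,n]), where h(A|B) = dim(A+B) − dim B. (Dimension version of Theorem 1: the functional-repair bound with an explicit nonnegative error term Δ = Σ_{i<j≤ℓ} h(S_{i→j} | W_[i+1,n]).) -/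
open Module Finset

section Aux

variable {F V : Type*} [Field F] [AddCommGroup V] [Module F V]

lemma condDim_eq_sub (A B : Submodule F V) [FiniteDimensional F A] [FiniteDimensional F B] :
    condDim A B = (finrank F A : ℤ) - (finrank F ↥(A ⊓ B) : ℤ) := by
  have h := Submodule.finrank_sup_add_finrank_inf_eq A B
  unfold condDim
  omega

lemma condDim_sup_left (A C B : Submodule F V) :
    condDim (A ⊔ C) B = condDim C B + condDim A (C ⊔ B) := by
  unfold condDim
  rw [sup_assoc]
  ring

/-- Per-pair step inequality:
`h(s | t⊔B) - h(s | t⊔w⊔B) + h(s | M) ≤ dim s` when `t ⊔ (w ⊔ B) ≤ M`. -/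
lemma condDim_step (s t B w M : Submodule F V) [FiniteDimensional F s]
    [FiniteDimensional F t] [FiniteDimensional F B] [FiniteDimensional F w]
    [FiniteDimensional F M] (h : t ⊔ (w ⊔ B) ≤ M) :
    condDim s (t ⊔ B) - condDim s (t ⊔ (w ⊔ B)) + condDim s M ≤ (finrank F s : ℤ) := by
  rw [condDim_eq_sub, condDim_eq_sub, condDim_eq_sub]
  have h1 : finrank F ↥(s ⊓ (t ⊔ (w ⊔ B))) ≤ finrank F ↥(s ⊓ M) :=
    Submodule.finrank_mono (inf_le_inf_left _ h)
  have h2 : (0:ℤ) ≤ (finrank F ↥(s ⊓ (t ⊔ B)) : ℤ) := by positivity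
  omega

/-- Inner claim (downward induction): for `T a = ⨆_{a ≤ i ≤ t} S i`,
`h(T a | B) - h(T a | W(t+1) ⊔ B) + Σ_{a≤i≤t} h(S i | W_[i+1,n]) ≤ Σ_{a≤i≤t} dim S i`,
where `B = W_[t+2,n]`. -/
lemma inner_claim (W : ℕ → Submodule F V) (S : ℕ → Submodule F V)
    (hfdW : ∀ i, FiniteDimensional F ↥(W i)) (hfdS : ∀ i, FiniteDimensional F ↥(S i))
    (n t : ℕ) (htn : t + 1 ≤ n) (hS : ∀ i, 1 ≤ i → i ≤ t → S i ≤ W i) :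
    ∀ k a, t + 1 - a = k → 1 ≤ a →
      condDim ((Finset.Icc a t).sup S) ((Finset.Icc (t+2) n).sup W)
        - condDim ((Finset.Icc a t).sup S) (W (t+1) ⊔ (Finset.Icc (t+2) n).sup W)
        + ∑ i ∈ Finset.Icc a t, condDim (S i) ((Finset.Icc (i+1) n).sup W)
      ≤ ∑ i ∈ Finset.Icc a t, (finrank F ↥(S i) : ℤ) := by
  haveI := hfdW; haveI := hfdS
  intro k
  induction k with
  | zero =>
    intro a ha h1a
    have he : Finset.Icc a t = ∅ := Finset.Icc_eq_empty (by omega)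
    rw [he]
    unfold condDim
    rw [Finset.sup_empty, bot_sup_eq, bot_sup_eq, Finset.sum_empty, Finset.sum_empty]
    ring_nf
    omega
  | succ k ih =>
    intro a ha h1a
    have hat : a ≤ t := by omega
    have hins : insert a (Finset.Icc (a+1) t) = Finset.Icc a t :=
      Finset.insert_Icc_add_one_left_eq_Icc hat
    have hnot : a ∉ Finset.Icc (a+1) t := by simp
    rw [← hins, Finset.sup_insert, Finset.sum_insert hnot, Finset.sum_insert hnot]
    set B := (Finset.Icc (t+2) n).sup W with hB
    set T := (Finset.Icc (a+1) t).sup S with hT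
    set M := (Finset.Icc (a+1) n).sup W with hM
    have hTM : T ⊔ (W (t+1) ⊔ B) ≤ M := by
      refine sup_le ?_ (sup_le ?_ ?_)
      · refine Finset.sup_le fun i hi => ?_
        rw [Finset.mem_Icc] at hi
        exact le_trans (hS i (by omega) hi.2)
          (Finset.le_sup (by rw [Finset.mem_Icc]; omega))
      · exact Finset.le_sup (by rw [Finset.mem_Icc]; omega)
      · exact Finset.sup_mono (Finset.Icc_subset_Icc (by omega) le_rfl)
    have hstep := condDim_step (S a) T B (W (t+1)) M hTM
    have hIH := ih (a+1) (by omega) (by omega)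
    rw [condDim_sup_left (S a) T B, condDim_sup_left (S a) T (W (t+1) ⊔ B)]
    rw [← hT] at hIH
    linarith [hIH, hstep]

end Aux

/-- Theorem 1, dimension version:
`dim W_[1,n] + Σ_{1≤i<j≤ℓ} h(S_{i→j} | W_[i+1,n])
  ≤ dim W_[ℓ+1,n] + Σ_{1≤i<j≤ℓ} dim S_{i→j}
    + Σ_{j≤ℓ} h(W_j | Σ_{i<j} S_{i→j} + W_[j+1,n])`. -/
theorem stmt5 {F V : Type*} [Field F] [AddCommGroup V] [Module F V]
    (W : ℕ → Submodule F V) (S : ℕ → ℕ → Submodule F V)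
    (hfdW : ∀ i, FiniteDimensional F ↥(W i)) (hfdS : ∀ i j, FiniteDimensional F ↥(S i j))
    (n ℓ : ℕ) (hln : ℓ ≤ n)
    (hSW : ∀ i j, 1 ≤ i → i < j → j ≤ ℓ → S i j ≤ W i) :
    (finrank F ↥((Finset.Icc 1 n).sup W) : ℤ)
      + ∑ j ∈ Finset.Icc 1 ℓ, ∑ i ∈ Finset.Icc 1 (j-1),
          condDim (S i j) ((Finset.Icc (i+1) n).sup W)
    ≤ (finrank F ↥((Finset.Icc (ℓ+1) n).sup W) : ℤ)
      + (∑ j ∈ Finset.Icc 1 ℓ, ∑ i ∈ Finset.Icc 1 (j-1), (finrank F ↥(S i j) : ℤ))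
      + ∑ j ∈ Finset.Icc 1 ℓ,
          condDim (W j) (((Finset.Icc 1 (j-1)).sup (fun i => S i j))
            ⊔ (Finset.Icc (j+1) n).sup W) := by
  haveI := hfdW; haveI := fun i => hfdS i
  induction ℓ with
  | zero => simp
  | succ l IH =>
    have hln' : l ≤ n := by omega
    have IH' := IH hln' (fun i j h1 h2 h3 => hSW i j h1 h2 (by omega))
    rw [Finset.sum_Icc_succ_top (by omega : 1 ≤ l + 1),
        Finset.sum_Icc_succ_top (by omega : 1 ≤ l + 1),
        Finset.sum_Icc_succ_top (by omega : 1 ≤ l + 1)]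
    simp only [Nat.add_sub_cancel]
    set B := (Finset.Icc (l+2) n).sup W with hB
    set T := (Finset.Icc 1 l).sup (fun i => S i (l+1)) with hT
    -- split off W (l+1) from W_[l+1,n]
    have hsplit : (Finset.Icc (l+1) n).sup W = W (l+1) ⊔ B := by
      rw [← Finset.insert_Icc_add_one_left_eq_Icc hln, Finset.sup_insert]; rfl
    have hfr : (finrank F ↥((Finset.Icc (l+1) n).sup W) : ℤ)
        = condDim (W (l+1)) B + (finrank F ↥B : ℤ) := by
      rw [hsplit]; unfold condDim; ring
    -- exact identity h(Wτ|B) - h(Wτ|T⊔B) = h(T|B) - h(T|Wτ⊔B)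
    have h1 := condDim_sup_left (W (l+1)) T B
    have h2 := condDim_sup_left T (W (l+1)) B
    rw [sup_comm T (W (l+1))] at h2
    -- inner claim at a = 1
    have hinner := inner_claim W (fun i => S i (l+1)) hfdW (fun i => hfdS i (l+1))
      n l hln (fun i hi1 hi2 => hSW i (l+1) hi1 (by omega) le_rfl)
      (l + 1 - 1) 1 rfl le_rfl
    rw [← hT, ← hB] at hinner
    linarith [IH', hinner, h1, h2, hfr]
end

section
/- Suppose W_1,...,W_n are random variables on a finite probability space, S_{i→j} are random variables with H(S_{i→j}|W_i)=0 for 1 ≤ i < j ≤ ℓ (ℓ ≤ n), H(S_{i→j}) ≤ β, H(W_j) ≤ α, and suppose that for each j ≤ ℓ, H(W_j | S_{1→j},...,S_{j-1→j}, W_{j+1},...,W_n) ≤ (d+1−n)β. Then H(W_1,...,W_n) ≤ (n−ℓ)α + C(ℓ,2)β + ℓ(d+1−n)β, where C(ℓ,2) = ℓ(ℓ−1)/2. -/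
/-!
Peel the repaired nodes off one at a time. For `j ≤ ℓ`, with `S` the helper data
`S_{1→j}, …, S_{j-1→j}` and `V` the tuple `W_{j+1}, …, W_n`,
`H(W_j, V) ≤ H(W_j, S, V) = H(W_j | S, V) + H(S, V) ≤ (d + 1 - n)β + (j - 1)β + H(V)`,
while the last `n - ℓ` nodes contribute at most `α` each. Summing over `j` telescopes to the
bound. Entropy enters only through data processing and subadditivity, both consequences of
`log x ≤ x - 1`.
-/

open Finset

/-- Shannon entropy of a random variable `Y` on a finite probability space with mass `p`. -/
noncomputable def entropy {Ω E : Type*} [Fintype Ω] [Fintype E] [DecidableEq E]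
    (p : Ω → ℝ) (Y : Ω → E) : ℝ :=
  ∑ y : E, Real.negMulLog (∑ ω : Ω, if Y ω = y then p ω else 0)

open Real

lemma negMulLog_sum_le {ι : Type*} (s : Finset ι) {f : ι → ℝ} (hf : ∀ i ∈ s, 0 ≤ f i) :
    negMulLog (∑ i ∈ s, f i) ≤ ∑ i ∈ s, negMulLog (f i) := by
  have hsum : negMulLog (∑ i ∈ s, f i) = ∑ i ∈ s, -(f i * log (∑ j ∈ s, f j)) := by
    simp only [negMulLog, neg_mul, sum_mul, sum_neg_distrib]
  rw [hsum]
  refine sum_le_sum fun i hi => ?_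
  rcases (hf i hi).eq_or_lt with hzero | hpos
  · simp [← hzero]
  · simpa [negMulLog] using
      mul_le_mul_of_nonneg_left (log_le_log hpos (single_le_sum hf hi)) hpos.le

/-- Gibbs' inequality in the pointwise form `r log (a b / r) ≤ a b - r`. -/
lemma negMulLog_le_of_le_of_le {r a b : ℝ} (hr : 0 ≤ r) (ha : r ≤ a) (hb : r ≤ b) :
    negMulLog r ≤ r * -log a + r * -log b + (a * b - r) := by
  rcases hr.eq_or_lt with rfl | hr
  · simpa using mul_nonneg ha hb
  have ha : 0 < a := hr.trans_le ha
  have hb : 0 < b := hr.trans_le hb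
  have hlog := log_le_sub_one_of_pos (show 0 < a * b / r by positivity)
  rw [log_div (by positivity) hr.ne', log_mul ha.ne' hb.ne'] at hlog
  have hcancel : r * (a * b / r) = a * b := by field_simp
  rw [negMulLog]
  nlinarith [mul_le_mul_of_nonneg_left hlog hr.le]

section Entropy

variable {Ω E F : Type*} [Fintype Ω] {p : Ω → ℝ}

noncomputable def law [DecidableEq E] (p : Ω → ℝ) (Y : Ω → E) (y : E) : ℝ :=
  ∑ ω, if Y ω = y then p ω else 0

lemma law_nonneg [DecidableEq E] (hp : ∀ ω, 0 ≤ p ω) (Y : Ω → E) (y : E) : 0 ≤ law p Y y :=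
  sum_nonneg fun ω _ => by split_ifs <;> simp [hp ω]

variable [Fintype E] [DecidableEq E]

lemma entropy_eq_sum_negMulLog_law (Y : Ω → E) :
    entropy p Y = ∑ y, negMulLog (law p Y y) := rfl

lemma sum_law (Y : Ω → E) : ∑ y, law p Y y = ∑ ω, p ω := by
  simp only [law]
  rw [sum_comm]
  simp

lemma entropy_eq_zero_of_subsingleton [Subsingleton E] (hp1 : ∑ ω, p ω = 1) (Y : Ω → E) :
    entropy p Y = 0 := by
  rw [entropy_eq_sum_negMulLog_law]
  refine sum_eq_zero fun y _ => ?_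
  have hlaw : law p Y y = 1 := by simp [law, Subsingleton.elim _ y, hp1]
  rw [hlaw, negMulLog_one]

variable [DecidableEq F]

lemma law_comp (Y : Ω → E) (f : E → F) (z : F) :
    law p (fun ω => f (Y ω)) z = ∑ y with f y = z, law p Y y := by
  simp only [law]
  rw [sum_comm]
  refine sum_congr rfl fun ω _ => ?_
  rw [sum_filter]
  simp only [← ite_and]
  rw [sum_eq_single (Y ω) (fun y _ hy => by simp [Ne.symm hy]) (by simp)]
  simp

lemma law_le_law_comp (hp : ∀ ω, 0 ≤ p ω) (Y : Ω → E) (f : E → F) (y : E) :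
    law p Y y ≤ law p (fun ω => f (Y ω)) (f y) := by
  rw [law_comp Y f]
  exact single_le_sum (fun y' _ => law_nonneg hp Y y') (by simp)

variable [Fintype F]

lemma sum_law_comp_mul (Y : Ω → E) (f : E → F) (g : F → ℝ) :
    ∑ z, law p (fun ω => f (Y ω)) z * g z = ∑ y, law p Y y * g (f y) := by
  simp only [law_comp, sum_mul]
  rw [← sum_fiberwise univ f fun y => law p Y y * g (f y)]
  refine sum_congr rfl fun z _ => sum_congr rfl fun y hy => ?_
  rw [(mem_filter.1 hy).2]

theorem entropy_comp_le (hp : ∀ ω, 0 ≤ p ω) (Y : Ω → E) (f : E → F) :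
    entropy p (fun ω => f (Y ω)) ≤ entropy p Y := by
  simp only [entropy_eq_sum_negMulLog_law, law_comp]
  calc ∑ z, negMulLog (∑ y with f y = z, law p Y y)
      ≤ ∑ z, ∑ y with f y = z, negMulLog (law p Y y) :=
        sum_le_sum fun z _ => negMulLog_sum_le _ fun y _ => law_nonneg hp Y y
    _ = ∑ y, negMulLog (law p Y y) := sum_fiberwise _ _ _

lemma entropy_comp_eq_sum_law_mul_neg_log (Y : Ω → E) (f : E → F) :
    entropy p (fun ω => f (Y ω)) = ∑ y, law p Y y * -log (law p (fun ω => f (Y ω)) (f y)) := by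
  rw [← sum_law_comp_mul Y f fun z => -log (law p (fun ω => f (Y ω)) z)]
  simp [entropy_eq_sum_negMulLog_law, negMulLog]

theorem entropy_pair_le (hp : ∀ ω, 0 ≤ p ω) (hp1 : ∑ ω, p ω = 1) (X : Ω → E) (Z : Ω → F) :
    entropy p (fun ω => (X ω, Z ω)) ≤ entropy p X + entropy p Z := by
  have hprod : ∑ u : E × F, law p X u.1 * law p Z u.2 = ∑ u, law p (fun ω => (X ω, Z ω)) u := by
    rw [Fintype.sum_prod_type, ← Fintype.sum_mul_sum, sum_law, sum_law, sum_law, hp1, one_mul]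
  have hX := entropy_comp_eq_sum_law_mul_neg_log (p := p) (fun ω => (X ω, Z ω)) Prod.fst
  have hZ := entropy_comp_eq_sum_law_mul_neg_log (p := p) (fun ω => (X ω, Z ω)) Prod.snd
  dsimp only at hX hZ
  set r := law p (fun ω => (X ω, Z ω))
  rw [entropy_eq_sum_negMulLog_law, hX, hZ, ← sum_add_distrib]
  calc ∑ u, negMulLog (r u)
      ≤ ∑ u, (r u * -log (law p X u.1) + r u * -log (law p Z u.2)
          + (law p X u.1 * law p Z u.2 - r u)) :=
        sum_le_sum fun u _ => negMulLog_le_of_le_of_le (law_nonneg hp _ u)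
          (law_le_law_comp hp _ Prod.fst u) (law_le_law_comp hp _ Prod.snd u)
    _ = _ := by rw [sum_add_distrib, sum_sub_distrib, hprod, sub_self, add_zero]

variable {ι : Type*} [DecidableEq ι]

lemma entropy_tuple_insert_le (hp : ∀ ω, 0 ≤ p ω) (X : ι → Ω → E) (a : ι) (s : Finset ι) :
    entropy p (fun ω => fun i : ↥(insert a s) => X i.1 ω)
      ≤ entropy p (fun ω => (X a ω, fun i : ↥s => X i.1 ω)) := by
  let glue : E × (↥s → E) → ↥(insert a s) → E := fun u i =>
    if h : i.1 = a then u.1 else u.2 ⟨i.1, (mem_insert.1 i.2).resolve_left h⟩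
  convert entropy_comp_le hp (fun ω => (X a ω, fun i : ↥s => X i.1 ω)) glue using 2
  ext ω i
  by_cases h : i.1 = a <;> simp [glue, h]

theorem entropy_tuple_le (hp : ∀ ω, 0 ≤ p ω) (hp1 : ∑ ω, p ω = 1) (X : ι → Ω → E)
    (s : Finset ι) : entropy p (fun ω => fun i : ↥s => X i.1 ω) ≤ ∑ i ∈ s, entropy p (X i) := by
  induction s using Finset.induction_on with
  | empty => simp [entropy_eq_zero_of_subsingleton hp1]
  | insert a s ha ih =>
    rw [sum_insert ha]
    calc _ ≤ entropy p (fun ω => (X a ω, fun i : ↥s => X i.1 ω)) := entropy_tuple_insert_le hp X a s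
      _ ≤ entropy p (X a) + entropy p (fun ω => fun i : ↥s => X i.1 ω) := entropy_pair_le hp hp1 _ _
      _ ≤ _ := by gcongr

lemma entropy_tuple_le_card_mul (hp : ∀ ω, 0 ≤ p ω) (hp1 : ∑ ω, p ω = 1) (X : ι → Ω → E)
    (s : Finset ι) {b : ℝ} (hb : ∀ i ∈ s, entropy p (X i) ≤ b) :
    entropy p (fun ω => fun i : ↥s => X i.1 ω) ≤ #s * b :=
  (entropy_tuple_le hp hp1 X s).trans <| by simpa using sum_le_card_nsmul s _ b hb

lemma entropy_tuple_insert_le_of_condEntropy_le (hp : ∀ ω, 0 ≤ p ω) (hp1 : ∑ ω, p ω = 1)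
    (X : ι → Ω → E) (a : ι) (s : Finset ι) (T : Ω → F) {c : ℝ}
    (hc : entropy p (fun ω => (X a ω, T ω, fun i : ↥s => X i.1 ω))
      - entropy p (fun ω => (T ω, fun i : ↥s => X i.1 ω)) ≤ c) :
    entropy p (fun ω => fun i : ↥(insert a s) => X i.1 ω)
      ≤ entropy p T + c + entropy p (fun ω => fun i : ↥s => X i.1 ω) := by
  have h₁ := entropy_tuple_insert_le hp X a s
  have h₂ := entropy_comp_le hp (fun ω => (X a ω, T ω, fun i : ↥s => X i.1 ω))
    fun u => (u.1, u.2.2)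
  have h₃ := entropy_pair_le hp hp1 T (fun ω => fun i : ↥s => X i.1 ω)
  linarith

end Entropy

lemma sum_range_natCast (n : ℕ) : ∑ i ∈ range n, (i : ℝ) = n * (n - 1) / 2 := by
  induction n with
  | zero => simp
  | succ n ih => rw [sum_range_succ, ih]; push_cast; ring

theorem stmt6_general {Ω E : Type*} [Fintype Ω] [Fintype E] [DecidableEq E]
    (p : Ω → ℝ) (hp : ∀ ω, 0 ≤ p ω) (hp1 : ∑ ω : Ω, p ω = 1)
    (W : ℕ → Ω → E) (S : ℕ → ℕ → Ω → E)
    (n ℓ d : ℕ) (hln : ℓ ≤ n)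
    (α β : ℝ)
    (hSβ : ∀ i j, 1 ≤ i → i < j → j ≤ ℓ → entropy p (S i j) ≤ β)
    (hWα : ∀ i, 1 ≤ i → i ≤ n → entropy p (W i) ≤ α)
    (hrep : ∀ j, 1 ≤ j → j ≤ ℓ →
      entropy p (fun ω =>
          (W j ω, fun i : ↥(Finset.Icc 1 (j-1)) => S i.1 j ω,
            fun m : ↥(Finset.Icc (j+1) n) => W m.1 ω))
        - entropy p (fun ω =>
          (fun i : ↥(Finset.Icc 1 (j-1)) => S i.1 j ω,
            fun m : ↥(Finset.Icc (j+1) n) => W m.1 ω))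
      ≤ ((d : ℝ) + 1 - (n : ℝ)) * β) :
    entropy p (fun ω => fun i : ↥(Finset.Icc 1 n) => W i.1 ω)
    ≤ ((n : ℝ) - (ℓ : ℝ)) * α + (ℓ : ℝ) * ((ℓ : ℝ) - 1) / 2 * β
      + (ℓ : ℝ) * ((d : ℝ) + 1 - (n : ℝ)) * β := by
  set D : ℝ := (d : ℝ) + 1 - n
  let H : ℕ → ℝ := fun i => entropy p (fun ω => fun m : ↥(Icc (i + 1) n) => W m.1 ω)
  have step : ∀ i ∈ range ℓ, H i - H (i + 1) ≤ i * β + D * β := by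
    intro i hi
    rw [mem_range] at hi
    have hS := entropy_tuple_le_card_mul hp hp1 (fun k => S k (i + 1)) (Icc 1 i) (b := β)
      fun k hk => hSβ k (i + 1) (mem_Icc.1 hk).1 (Nat.lt_succ_of_le (mem_Icc.1 hk).2) hi
    have hpeel := entropy_tuple_insert_le_of_condEntropy_le hp hp1 W (i + 1) (Icc (i + 2) n) _
      (by simpa using hrep (i + 1) (by omega) hi)
    have hIcc : insert (i + 1) (Icc (i + 2) n) = Icc (i + 1) n :=
      insert_Icc_add_one_left_eq_Icc (by omega)
    rw [hIcc] at hpeel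
    simp only [Nat.card_Icc, add_tsub_cancel_right] at hS
    simp only [H]
    linarith
  have htail : H ℓ ≤ (n - ℓ) * α := by
    simpa [Nat.cast_sub hln] using entropy_tuple_le_card_mul hp hp1 W (Icc (ℓ + 1) n)
      fun i hi => hWα i ((Nat.le_add_left 1 ℓ).trans (mem_Icc.1 hi).1) (mem_Icc.1 hi).2
  have htelescope := sum_le_sum step
  rw [sum_range_sub', sum_add_distrib, ← sum_mul, sum_range_natCast, sum_const, card_range,
    nsmul_eq_mul] at htelescope
  simp only [H] at htelescope htail
  linarith

/-- the functional-repair outer bound `B(n) ≤ B_ℓ(n)`: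
under the determinism, size and repair hypotheses,
`H(W_1,...,W_n) ≤ (n−ℓ)α + C(ℓ,2)β + ℓ(d+1−n)β`. -/
theorem stmt6 {Ω E : Type*} [Fintype Ω] [Fintype E] [DecidableEq E]
    (p : Ω → ℝ) (hp : ∀ ω, 0 ≤ p ω) (hp1 : ∑ ω : Ω, p ω = 1)
    (W : ℕ → Ω → E) (S : ℕ → ℕ → Ω → E)
    (n ℓ d : ℕ) (hln : ℓ ≤ n) (hnd : n ≤ d + 1)
    (α β : ℝ) (hα : 0 ≤ α) (hβ : 0 ≤ β)
    (hdet : ∀ i j, 1 ≤ i → i < j → j ≤ ℓ →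
      entropy p (fun ω => (S i j ω, W i ω)) - entropy p (W i) = 0)
    (hSβ : ∀ i j, 1 ≤ i → i < j → j ≤ ℓ → entropy p (S i j) ≤ β)
    (hWα : ∀ i, 1 ≤ i → i ≤ n → entropy p (W i) ≤ α)
    (hrep : ∀ j, 1 ≤ j → j ≤ ℓ →
      entropy p (fun ω =>
          (W j ω, fun i : ↥(Finset.Icc 1 (j-1)) => S i.1 j ω,
            fun m : ↥(Finset.Icc (j+1) n) => W m.1 ω))
        - entropy p (fun ω =>
          (fun i : ↥(Finset.Icc 1 (j-1)) => S i.1 j ω,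
            fun m : ↥(Finset.Icc (j+1) n) => W m.1 ω))
      ≤ ((d : ℝ) + 1 - (n : ℝ)) * β) :
    entropy p (fun ω => fun i : ↥(Finset.Icc 1 n) => W i.1 ω)
    ≤ ((n : ℝ) - (ℓ : ℝ)) * α + (ℓ : ℝ) * ((ℓ : ℝ) - 1) / 2 * β
      + (ℓ : ℝ) * ((d : ℝ) + 1 - (n : ℝ)) * β :=
  stmt6_general p hp hp1 W S n ℓ d hln α β hSβ hWα hrep
end

section
/- Let X_1,...,X_n, X_{n+1},...,X_{n+v} be finite-dimensional subspaces of a vector space such that h(X_i | X_{n+u}) ≤ h(X_i | X_[i+1,n+u−1]) for all 1 ≤ i < ℓ and 1 ≤ u ≤ v. Then for every 1 ≤ j ≤ ℓ: Σ_{u=0}^{v} h(X_j | X_[j+1,n+u]) + Σ_{i<j} h(X_i | X_[i+1,n+v]) ≤ Σ_{i<j} h(X_i | X_[i+1,n] omitting X_j) + Σ_{u=0}^{v} h(X_j | X_[1,n+u] omitting X_j). (Dimension version of Lemma 2: telescoping sum of the chain-rule identity over v+1 extended sequences.) -/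
/-!
Both sides of the chain-rule identity
`h(X_j | X_[j+1,m]) + Σ_{i<j} h(X_i | X_[i+1,m])`
  `= Σ_{i<j} h(X_i | X_[i+1,m] \ j) + h(X_j | X_[1,m] \ j)`
telescope to `dim X_[1,m] - dim X_[j+1,m]`. Summing it over `m = n, …, n+v` leaves the terms
`h(X_i | X_[i+1,n+u] \ j)` for `u ≥ 1`; each is at most `h(X_i | X_{n+u})`, as `X_{n+u}` lies in
`X_[i+1,n+u] \ j`, and hence, by hypothesis, at most
`h(X_i | X_[i+1,n+u-1])`, which is the corresponding term of the left-hand side shifted by one.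
-/

open Module Finset

lemma sum_range_add_le_add_sum_range {M : Type*} [AddCommMonoid M] [PartialOrder M]
    [IsOrderedAddMonoid M] (a b : ℕ → M) (v : ℕ) (h : ∀ u < v, a (u + 1) ≤ b u) :
    ∑ u ∈ range (v + 1), a u + b v ≤ a 0 + ∑ u ∈ range (v + 1), b u := by
  rw [sum_range_succ', sum_range_succ b]
  calc ∑ u ∈ range v, a (u + 1) + a 0 + b v
        = a 0 + (∑ u ∈ range v, a (u + 1) + b v) := by abel
    _ ≤ a 0 + (∑ u ∈ range v, b u + b v) := by
      gcongr with u hu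
      exact h u (mem_range.1 hu)

section CondDim

variable {F V : Type*} [Field F] [AddCommGroup V] [Module F V]

lemma condDim_eq_finrank_sub_finrank_inf (A B : Submodule F V) [FiniteDimensional F A]
    [FiniteDimensional F B] :
    condDim A B = (finrank F A : ℤ) - finrank F ↥(A ⊓ B) := by
  have := Submodule.finrank_sup_add_finrank_inf_eq A B
  unfold condDim
  omega

lemma condDim_le_condDim_of_le (A : Submodule F V) {B C : Submodule F V}
    [FiniteDimensional F A] [FiniteDimensional F C] (hBC : B ≤ C) :
    condDim A C ≤ condDim A B := by
  have : FiniteDimensional F B := Submodule.finiteDimensional_of_le hBC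
  rw [condDim_eq_finrank_sub_finrank_inf, condDim_eq_finrank_sub_finrank_inf]
  have := Submodule.finrank_mono (inf_le_inf_left A hBC)
  omega

lemma sum_Ico_condDim_eq_finrank_sub (X T : ℕ → Submodule F V) {a b : ℕ} (hab : a ≤ b)
    (hT : ∀ i ∈ Ico a b, X i ⊔ T (i + 1) = T i) :
    ∑ i ∈ Ico a b, condDim (X i) (T (i + 1)) = (finrank F (T a) : ℤ) - finrank F (T b) := by
  have hterm : ∀ i ∈ Ico a b, condDim (X i) (T (i + 1))
      = -(finrank F (T (i + 1)) : ℤ) - -(finrank F (T i) : ℤ) := fun i hi => by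
    rw [condDim, hT i hi]
    ring
  rw [sum_congr rfl hterm, sum_Ico_sub (fun i => -(finrank F (T i) : ℤ)) hab]
  ring

lemma sup_sup_Icc_add_one (X : ℕ → Submodule F V) {a m : ℕ} (ham : a ≤ m) :
    X a ⊔ (Icc (a + 1) m).sup X = (Icc a m).sup X := by
  rw [← sup_insert, insert_Icc_add_one_left_eq_Icc ham]

lemma sup_sup_Icc_add_one_erase (X : ℕ → Submodule F V) {a m j : ℕ} (ham : a ≤ m)
    (haj : a ≠ j) :
    X a ⊔ ((Icc (a + 1) m).erase j).sup X = ((Icc a m).erase j).sup X := by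
  rw [← sup_insert, ← erase_insert_of_ne haj, insert_Icc_add_one_left_eq_Icc ham]

lemma condDim_add_sum_condDim_eq_erase (X : ℕ → Submodule F V) {j m : ℕ} (hj : 1 ≤ j)
    (hjm : j ≤ m) :
    condDim (X j) ((Icc (j + 1) m).sup X)
        + ∑ i ∈ Ico 1 j, condDim (X i) ((Icc (i + 1) m).sup X)
      = ∑ i ∈ Ico 1 j, condDim (X i) (((Icc (i + 1) m).erase j).sup X)
        + condDim (X j) (((Icc 1 m).erase j).sup X) := by
  have hfull := sum_Ico_condDim_eq_finrank_sub X (fun i => (Icc i m).sup X) (by omega : 1 ≤ j + 1)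
    fun i hi => sup_sup_Icc_add_one X (by have := mem_Ico.1 hi; omega)
  have herase := sum_Ico_condDim_eq_finrank_sub X (fun i => ((Icc i m).erase j).sup X) hj
    fun i hi => sup_sup_Icc_add_one_erase X (by have := mem_Ico.1 hi; omega)
      (mem_Ico.1 hi).2.ne
  have hjoin : X j ⊔ ((Icc 1 m).erase j).sup X = (Icc 1 m).sup X := by
    rw [← sup_insert, insert_erase (mem_Icc.2 ⟨hj, hjm⟩)]
  rw [sum_Ico_succ_top hj] at hfull
  rw [Icc_erase_left, ← Icc_add_one_left_eq_Ioc] at herase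
  rw [add_comm, hfull, herase, condDim, hjoin]
  ring

lemma sum_condDim_erase_add_le (X : ℕ → Submodule F V) [∀ i, FiniteDimensional F (X i)]
    {i j n : ℕ} (v : ℕ) (hin : i ≤ n) (hjn : j ≤ n)
    (hcond : ∀ u, 1 ≤ u → u ≤ v →
      condDim (X i) (X (n + u)) ≤ condDim (X i) ((Icc (i + 1) (n + u - 1)).sup X)) :
    ∑ u ∈ range (v + 1), condDim (X i) (((Icc (i + 1) (n + u)).erase j).sup X)
        + condDim (X i) ((Icc (i + 1) (n + v)).sup X)
      ≤ condDim (X i) (((Icc (i + 1) n).erase j).sup X)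
        + ∑ u ∈ range (v + 1), condDim (X i) ((Icc (i + 1) (n + u)).sup X) := by
  refine sum_range_add_le_add_sum_range
    (fun u => condDim (X i) (((Icc (i + 1) (n + u)).erase j).sup X))
    (fun u => condDim (X i) ((Icc (i + 1) (n + u)).sup X)) v fun u hu => ?_
  have hmem : n + (u + 1) ∈ (Icc (i + 1) (n + (u + 1))).erase j := by
    simp only [mem_erase, mem_Icc]
    omega
  calc condDim (X i) (((Icc (i + 1) (n + (u + 1))).erase j).sup X)
      ≤ condDim (X i) (X (n + (u + 1))) := condDim_le_condDim_of_le _ (le_sup hmem)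
    _ ≤ condDim (X i) ((Icc (i + 1) (n + u)).sup X) := by
      simpa using hcond (u + 1) (by omega) (by omega)

end CondDim

/-- Lemma 2, dimension version: if
`h(X_i | X_{n+u}) ≤ h(X_i | X_[i+1,n+u-1])` for `1 ≤ i < ℓ`, `1 ≤ u ≤ v`, then for `1 ≤ j ≤ ℓ`,
`Σ_{u=0}^v h(X_j | X_[j+1,n+u]) + Σ_{i<j} h(X_i | X_[i+1,n+v])
  ≤ Σ_{i<j} h(X_i | X_[i+1,n]\j) + Σ_{u=0}^v h(X_j | X_[1,n+u]\j)`. -/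
theorem stmt7 {F V : Type*} [Field F] [AddCommGroup V] [Module F V]
    (X : ℕ → Submodule F V) (hfd : ∀ i, FiniteDimensional F ↥(X i))
    (n ℓ v : ℕ) (hln : ℓ ≤ n)
    (hcond : ∀ i u, 1 ≤ i → i < ℓ → 1 ≤ u → u ≤ v →
      condDim (X i) (X (n+u)) ≤ condDim (X i) ((Finset.Icc (i+1) (n+u-1)).sup X))
    (j : ℕ) (hj1 : 1 ≤ j) (hjl : j ≤ ℓ) :
    (∑ u ∈ Finset.range (v+1), condDim (X j) ((Finset.Icc (j+1) (n+u)).sup X))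
      + ∑ i ∈ Finset.Icc 1 (j-1), condDim (X i) ((Finset.Icc (i+1) (n+v)).sup X)
    ≤ (∑ i ∈ Finset.Icc 1 (j-1), condDim (X i) (((Finset.Icc (i+1) n).erase j).sup X))
      + ∑ u ∈ Finset.range (v+1), condDim (X j) (((Finset.Icc 1 (n+u)).erase j).sup X) := by
  have := hfd
  have hjn : j ≤ n := hjl.trans hln
  rw [Icc_sub_one_right_eq_Ico_of_not_isMin (by simpa using Nat.one_le_iff_ne_zero.1 hj1)]
  have hchain := sum_congr rfl fun u (_ : u ∈ range (v + 1)) =>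
    condDim_add_sum_condDim_eq_erase X hj1 (hjn.trans (Nat.le_add_right n u))
  have hshift := sum_le_sum fun i (hi : i ∈ Ico 1 j) =>
    have ⟨hi1, hij⟩ := mem_Ico.1 hi
    sum_condDim_erase_add_le X v (by omega) hjn fun u => hcond i u hi1 (by omega)
  simp only [sum_add_distrib] at hchain hshift
  rw [sum_comm] at hshift
  conv_rhs at hshift => rw [sum_comm]
  linarith
end

section
/- Let W_1,...,W_{n+v} be finite-dimensional subspaces of a vector space, S_{i→j} ≤ W_i for 1 ≤ i < j ≤ ℓ ≤ n, and suppose h(S_{i→j} | W_{n+u}) ≤ h(S_{i→j} | W_[i+1,n+u−1]) for all 1 ≤ i < j ≤ ℓ and 1 ≤ u ≤ v. Then (v+1)·dim(W_[1,n]) ≤ dim(W_[ℓ+1,n]) + Σ_{1≤i<j≤ℓ} dim(S_{i→j}) + Σ_{j≤ℓ} h(W_j | S_{[1,j−1]→j} + W_[j+1,n]) + Σ_{u=1}^{v} ( dim(W_[ℓ+1,n] + W_{n+u}) + Σ_{j≤ℓ} h(W_j | S_{[1,j−1]→j} + W_[j+1,n] + W_{n+u}) ), where S_{[1,j−1]→j}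 = Σ_{i<j} S_{i→j}. (Dimension version of Theorem 2.) -/
/-!
Peeling `W 1, …, W ℓ` off `W_[1,n] + X` by the chain rule, and splitting each
`h(W j | W_[j+1,n] + X)` further along the incoming flows `S i j`, writes `dim (W_[1,n] + X)` as
the matching terms of the right-hand side plus the conditional mutual informations
`I(W j ; S i j | S_{[i+1,j-1]→j} + W_[j+1,n] + X)`; take `X = 0` and `X = W (n+u)`.
For a fixed pair `i < j` these `v + 1` informations add up to at most `dim S i j`: by symmetry
each is a drop of `h(S i j | ·)`, and the hypothesis on the virtual nodes places the drops
along the single decreasing sequence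
`h(S i j | W j + S_{[i+1,j-1]→j} + W_[j+1,n] + W (n+1) + … + W (n+k))`,
which starts below `dim S i j` and stays nonnegative.
-/

open Module Finset

theorem sup_Icc_eq_sup_sup_Icc_add_one {α : Type*} [SemilatticeSup α] [OrderBot α] (f : ℕ → α)
    {a b : ℕ} (h : a ≤ b) : (Icc a b).sup f = f a ⊔ (Icc (a + 1) b).sup f := by
  rw [← insert_Icc_add_one_left_eq_Icc h, sup_insert]

theorem sum_Icc_sub_of_le_add_one (f : ℕ → ℤ) {m n : ℕ} (h : m ≤ n + 1) :
    ∑ i ∈ Icc m n, (f (i + 1) - f i) = f (n + 1) - f m := by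
  rw [← Ico_add_one_right_eq_Icc]
  exact sum_Ico_sub f h

theorem sum_Icc_pred_sub (p : ℕ → ℤ) (v : ℕ) :
    ∑ u ∈ Icc 1 v, (p (u - 1) - p u) = p 0 - p v := by
  induction v with
  | zero => simp
  | succ v ih =>
    rw [sum_Icc_succ_top (by omega), ih]
    simp

section CondDim

variable {F V : Type*} [Field F] [AddCommGroup V] [Module F V]

/-- The conditional mutual information `I(A ; B | C)` of the dimension function. -/
noncomputable def condMutualDim (A B C : Submodule F V) : ℤ :=
  condDim A C - condDim A (B ⊔ C)

theorem condMutualDim_comm (A B C : Submodule F V) :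
    condMutualDim A B C = condMutualDim B A C := by
  unfold condMutualDim condDim
  rw [sup_left_comm A B C]
  ring

theorem condDim_nonneg (A B : Submodule F V) [FiniteDimensional F A] [FiniteDimensional F B] :
    0 ≤ condDim A B :=
  sub_nonneg.2 <| by exact_mod_cast Submodule.finrank_mono le_sup_right

theorem condDim_le_finrank (A B : Submodule F V) [FiniteDimensional F A]
    [FiniteDimensional F B] : condDim A B ≤ finrank F A := by
  have := Submodule.finrank_add_le_finrank_add_finrank A B
  unfold condDim
  omega

theorem condDim_anti (A : Submodule F V) {B B' : Submodule F V} [FiniteDimensional F A]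
    [FiniteDimensional F B] (h : B' ≤ B) : condDim A B ≤ condDim A B' := by
  have hB' : FiniteDimensional F B' := Submodule.finiteDimensional_of_le h
  have hmod := Submodule.finrank_sup_add_finrank_inf_eq (A ⊔ B') B
  have hsup : A ⊔ B' ⊔ B = A ⊔ B := by rw [sup_assoc, sup_eq_right.2 h]
  have hinf : finrank F B' ≤ finrank F ↥((A ⊔ B') ⊓ B) :=
    Submodule.finrank_mono (le_inf le_sup_right h)
  rw [hsup] at hmod
  unfold condDim
  omega

theorem finrank_sup_eq_add_sum_condDim (W : ℕ → Submodule F V) (X : Submodule F V)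
    {ℓ n : ℕ} (h : ℓ ≤ n) :
    (finrank F ↥((Icc 1 n).sup W ⊔ X) : ℤ)
      = finrank F ↥((Icc (ℓ + 1) n).sup W ⊔ X)
        + ∑ j ∈ Icc 1 ℓ, condDim (W j) ((Icc (j + 1) n).sup W ⊔ X) := by
  set ψ : ℕ → ℤ := fun j => finrank F ↥((Icc j n).sup W ⊔ X)
  have hstep : ∀ j ∈ Icc 1 ℓ,
      condDim (W j) ((Icc (j + 1) n).sup W ⊔ X) = -(ψ (j + 1) - ψ j) := by
    intro j hj
    simp only [ψ, condDim]
    rw [sup_Icc_eq_sup_sup_Icc_add_one W (show j ≤ n by grind), sup_assoc]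
    ring
  rw [sum_congr rfl hstep, sum_neg_distrib, sum_Icc_sub_of_le_add_one ψ (by omega)]
  ring

theorem condDim_eq_add_sum_condMutualDim (A T : Submodule F V) (f : ℕ → Submodule F V)
    (m : ℕ) :
    condDim A T = condDim A ((Icc 1 m).sup f ⊔ T)
      + ∑ i ∈ Icc 1 m, condMutualDim A (f i) ((Icc (i + 1) m).sup f ⊔ T) := by
  set φ : ℕ → ℤ := fun i => condDim A ((Icc i m).sup f ⊔ T)
  have hstep : ∀ i ∈ Icc 1 m,
      condMutualDim A (f i) ((Icc (i + 1) m).sup f ⊔ T) = φ (i + 1) - φ i := by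
    intro i hi
    simp only [φ, condMutualDim]
    rw [sup_Icc_eq_sup_sup_Icc_add_one f (show i ≤ m by grind), sup_assoc]
  rw [sum_congr rfl hstep, sum_Icc_sub_of_le_add_one φ (by omega)]
  simp [φ]

/-- `hZ` lets `Z u` be traded for `A + N + Z 1 + … + Z (u-1)`, so the losses
`I(S ; A | ·)` lie along the one decreasing sequence `p k = h(S | A + N + Z 1 + … + Z k)`. -/
theorem condMutualDim_add_sum_le_finrank (A S N : Submodule F V) (Z : ℕ → Submodule F V)
    (v : ℕ) [FiniteDimensional F A] [FiniteDimensional F S] [FiniteDimensional F N]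
    [∀ u, FiniteDimensional F (Z u)]
    (hZ : ∀ u ∈ Icc 1 v, condDim S (Z u) ≤ condDim S (A ⊔ N ⊔ (Icc 1 (u - 1)).sup Z)) :
    condMutualDim A S N + ∑ u ∈ Icc 1 v, condMutualDim A S (N ⊔ Z u) ≤ finrank F S := by
  set p : ℕ → ℤ := fun k => condDim S (A ⊔ N ⊔ (Icc 1 k).sup Z)
  have hfirst : condMutualDim A S N ≤ finrank F S - p 0 := by
    have hp0 : p 0 = condDim S (A ⊔ N) := by simp [p]
    have hN := condDim_le_finrank S N
    rw [condMutualDim_comm, condMutualDim]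
    omega
  have hstep : ∀ u ∈ Icc 1 v, condMutualDim A S (N ⊔ Z u) ≤ p (u - 1) - p u := by
    intro u hu
    have hZu : Z u ≤ (Icc 1 u).sup Z := le_sup (f := Z) (by simp_all)
    have hdrop : condDim S (N ⊔ Z u) ≤ condDim S (Z u) := condDim_anti S le_sup_right
    have hpu : p u ≤ condDim S (A ⊔ (N ⊔ Z u)) :=
      condDim_anti S (by rw [← sup_assoc]; exact sup_le_sup_left hZu _)
    have hvirt : condDim S (Z u) ≤ p (u - 1) := hZ u hu
    rw [condMutualDim_comm, condMutualDim]
    omega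
  have hpv : 0 ≤ p v := condDim_nonneg _ _
  linarith [sum_le_sum hstep, sum_Icc_pred_sub p v]

end CondDim

section Network

variable {F V : Type*} [Field F] [AddCommGroup V] [Module F V]
  (W : ℕ → Submodule F V) (S : ℕ → ℕ → Submodule F V)

noncomputable def flowInfo (n ℓ : ℕ) (X : Submodule F V) : ℤ :=
  ∑ j ∈ Icc 1 ℓ, ∑ i ∈ Icc 1 (j - 1),
    condMutualDim (W j) (S i j) ((Icc (i + 1) (j - 1)).sup (fun i' => S i' j)
      ⊔ (Icc (j + 1) n).sup W ⊔ X)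

theorem finrank_sup_eq_add_sum_add_flowInfo {n ℓ : ℕ} (hln : ℓ ≤ n) (X : Submodule F V) :
    (finrank F ↥((Icc 1 n).sup W ⊔ X) : ℤ)
      = finrank F ↥((Icc (ℓ + 1) n).sup W ⊔ X)
        + ∑ j ∈ Icc 1 ℓ,
            condDim (W j) ((Icc 1 (j - 1)).sup (fun i => S i j) ⊔ (Icc (j + 1) n).sup W ⊔ X)
        + flowInfo W S n ℓ X := by
  rw [finrank_sup_eq_add_sum_condDim W X hln, add_assoc, flowInfo, ← sum_add_distrib]
  congr 1
  refine sum_congr rfl fun j _ => ?_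
  simpa only [sup_assoc] using
    condDim_eq_add_sum_condMutualDim (W j) ((Icc (j + 1) n).sup W ⊔ X) (fun i => S i j) (j - 1)

theorem sup_inflow_sup_virtual_le_sup_Icc {n i j u : ℕ} (hij : i < j) (hjn : j ≤ n)
    (hu : 1 ≤ u) (hSW : ∀ i' ∈ Icc (i + 1) (j - 1), S i' j ≤ W i') :
    W j ⊔ ((Icc (i + 1) (j - 1)).sup (fun i' => S i' j) ⊔ (Icc (j + 1) n).sup W)
        ⊔ (Icc 1 (u - 1)).sup (fun k => W (n + k))
      ≤ (Icc (i + 1) (n + u - 1)).sup W := by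
  refine sup_le (sup_le (le_sup (by grind)) (sup_le ?_ ?_)) ?_
  · exact Finset.sup_le fun k hk => (hSW k hk).trans (le_sup (by grind))
  · exact sup_mono (Icc_subset_Icc (by omega) (by omega))
  · exact Finset.sup_le fun k hk => le_sup (f := W) (by grind)

theorem flowInfo_add_sum_le [∀ i, FiniteDimensional F (W i)]
    [∀ i j, FiniteDimensional F (S i j)] {n ℓ v : ℕ} (hln : ℓ ≤ n)
    (hSW : ∀ i j, 1 ≤ i → i < j → j ≤ ℓ → S i j ≤ W i)
    (hvirt : ∀ i j u, 1 ≤ i → i < j → j ≤ ℓ → 1 ≤ u → u ≤ v →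
      condDim (S i j) (W (n + u)) ≤ condDim (S i j) ((Icc (i + 1) (n + u - 1)).sup W)) :
    flowInfo W S n ℓ ⊥ + ∑ u ∈ Icc 1 v, flowInfo W S n ℓ (W (n + u))
      ≤ ∑ j ∈ Icc 1 ℓ, ∑ i ∈ Icc 1 (j - 1), (finrank F (S i j) : ℤ) := by
  simp only [flowInfo, sup_bot_eq]
  rw [sum_comm, ← sum_add_distrib]
  refine sum_le_sum fun j hj => ?_
  rw [sum_comm, ← sum_add_distrib]
  refine sum_le_sum fun i hi => ?_
  obtain ⟨hj1, hjℓ⟩ := mem_Icc.1 hj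
  obtain ⟨hi1, hij⟩ := mem_Icc.1 hi
  refine condMutualDim_add_sum_le_finrank _ _ _ (fun u => W (n + u)) v fun u hu => ?_
  obtain ⟨hu1, huv⟩ := mem_Icc.1 hu
  refine (hvirt i j u hi1 (by omega) hjℓ hu1 huv).trans (condDim_anti _ ?_)
  exact sup_inflow_sup_virtual_le_sup_Icc W S (by omega) (by omega) hu1
    fun i' hi' => hSW i' j (by grind) (by grind) hjℓ

end Network

/-- Theorem 2, dimension version. -/
theorem stmt8 {F V : Type*} [Field F] [AddCommGroup V] [Module F V]
    (W : ℕ → Submodule F V) (S : ℕ → ℕ → Submodule F V)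
    (hfdW : ∀ i, FiniteDimensional F ↥(W i)) (hfdS : ∀ i j, FiniteDimensional F ↥(S i j))
    (n ℓ v : ℕ) (hln : ℓ ≤ n)
    (hSW : ∀ i j, 1 ≤ i → i < j → j ≤ ℓ → S i j ≤ W i)
    (hvirt : ∀ i j u, 1 ≤ i → i < j → j ≤ ℓ → 1 ≤ u → u ≤ v →
      condDim (S i j) (W (n+u)) ≤ condDim (S i j) ((Finset.Icc (i+1) (n+u-1)).sup W)) :
    ((v : ℤ) + 1) * (finrank F ↥((Finset.Icc 1 n).sup W) : ℤ)
    ≤ (finrank F ↥((Finset.Icc (ℓ+1) n).sup W) : ℤ)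
      + (∑ j ∈ Finset.Icc 1 ℓ, ∑ i ∈ Finset.Icc 1 (j-1), (finrank F ↥(S i j) : ℤ))
      + (∑ j ∈ Finset.Icc 1 ℓ,
          condDim (W j) (((Finset.Icc 1 (j-1)).sup (fun i => S i j))
            ⊔ (Finset.Icc (j+1) n).sup W))
      + ∑ u ∈ Finset.Icc 1 v,
          ((finrank F ↥(((Finset.Icc (ℓ+1) n).sup W) ⊔ W (n+u)) : ℤ)
            + ∑ j ∈ Finset.Icc 1 ℓ,
                condDim (W j) (((Finset.Icc 1 (j-1)).sup (fun i => S i j))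
                  ⊔ (Finset.Icc (j+1) n).sup W ⊔ W (n+u))) := by
  have hlevel := finrank_sup_eq_add_sum_add_flowInfo W S hln
  have h0 := hlevel ⊥
  rw [sup_bot_eq, sup_bot_eq] at h0
  simp only [sup_bot_eq] at h0
  have hu : ∀ u ∈ Icc 1 v, (finrank F ↥((Icc 1 n).sup W) : ℤ)
      ≤ (finrank F ↥((Icc (ℓ + 1) n).sup W ⊔ W (n + u))
          + ∑ j ∈ Icc 1 ℓ, condDim (W j)
              ((Icc 1 (j - 1)).sup (fun i => S i j) ⊔ (Icc (j + 1) n).sup W ⊔ W (n + u)))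
        + flowInfo W S n ℓ (W (n + u)) := fun u _ =>
    (Nat.cast_le.2 (Submodule.finrank_mono le_sup_left)).trans_eq (hlevel (W (n + u)))
  have hsum := sum_le_sum hu
  rw [sum_add_distrib, sum_const, Nat.card_Icc, nsmul_eq_mul] at hsum
  have hflow := flowInfo_add_sum_le W S hln hSW hvirt
  push_cast at hsum
  linarith
end
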